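/- arXiv:math/0209070 — 2 statements merged into one kernel-verified Lean document; each statement's English description precedes it below -/
import Mathlib

section
/- For all integers n, k with 0 < k ≤ n, the sum ∑_{i=0}^{k-1} (-1)^{k+i-1} * C(n,i) / (k-i) equals C(n,k) * (H_n - H_{n-k}). -/
/-- The `m`-th harmonic number `H_m = ∑_{i=1}^m 1/i` (with `H 0 = 0`). -/
def H (m : ℕ) : ℚ := ∑ i ∈ Finset.range m, (1 : ℚ) / (i + 1)

def T (n k : ℕ) : ℚ := ∑ j ∈ Finset.range k, (-1:ℚ)^j * (n.choose (k-1-j)) / (j+1)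

lemma H_succ (m : ℕ) : H (m+1) = H m + 1/(m+1) := by
  simp [H, Finset.sum_range_succ]

lemma lemL (m : ℕ) : ∑ j ∈ Finset.range (m+1), (-1:ℚ)^j * (m.choose j)/(j+1) = 1/(m+1) := by
  have key : ∑ j ∈ Finset.range (m+1), (-1:ℚ)^j * ((m+1).choose (j+1)) = 1 := by
    have h0 : ∑ j ∈ Finset.range (m+2), (-1:ℚ)^j * ((m+1).choose j) = 0 := by
      have h := @Int.alternating_sum_range_choose (m+1)
      rw [if_neg (Nat.succ_ne_zero m)] at h
      have h2 := congrArg (fun x : ℤ => (x:ℚ)) h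
      push_cast at h2
      convert h2 using 2
    rw [Finset.sum_range_succ' (fun j => (-1:ℚ)^j * ((m+1).choose j)) (m+1)] at h0
    have hx : ∀ j ∈ Finset.range (m+1), (-1:ℚ)^j * ((m+1).choose (j+1))
        = -((-1:ℚ)^(j+1) * ((m+1).choose (j+1))) := fun j _ => by ring
    rw [Finset.sum_congr rfl hx, Finset.sum_neg_distrib]
    simp only [pow_zero, one_mul, Nat.choose_zero_right, Nat.cast_one] at h0
    linarith
  have hterm : ∀ j ∈ Finset.range (m+1),
      (-1:ℚ)^j * (m.choose j)/(j+1) = (1/((m:ℚ)+1)) * ((-1:ℚ)^j * ((m+1).choose (j+1))) := by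
    intro j _
    have h := Nat.add_one_mul_choose_eq m j
    have h' : ((m:ℚ)+1) * (m.choose j) = ((m+1).choose (j+1)) * ((j:ℚ)+1) := by
      exact_mod_cast congrArg (fun x : ℕ => (x : ℚ)) h
    have hj : ((j:ℚ)+1) ≠ 0 := by positivity
    have hm : ((m:ℚ)+1) ≠ 0 := by positivity
    have hdiv : (m.choose j : ℚ)/((j:ℚ)+1) = ((m+1).choose (j+1):ℚ)/((m:ℚ)+1) := by
      rw [div_eq_div_iff hj hm]; linarith
    rw [mul_div_assoc, hdiv]; ring
  rw [Finset.sum_congr rfl hterm, ← Finset.mul_sum, key, mul_one]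

lemma lemHarm (m : ℕ) : ∑ j ∈ Finset.range m, (-1:ℚ)^j * (m.choose (j+1))/(j+1) = H m := by
  induction m with
  | zero => simp [H]
  | succ m ih =>
    have hterm : ∀ j ∈ Finset.range (m+1),
        (-1:ℚ)^j * ((m+1).choose (j+1))/(j+1)
          = (-1:ℚ)^j * (m.choose j)/(j+1) + (-1:ℚ)^j * (m.choose (j+1))/(j+1) := by
      intro j _
      rw [Nat.choose_succ_succ]
      push_cast [Nat.choose_succ_succ]
      ring
    rw [Finset.sum_congr rfl hterm, Finset.sum_add_distrib, lemL]
    have hlast : ∑ j ∈ Finset.range (m+1), (-1:ℚ)^j * (m.choose (j+1))/(j+1)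
        = ∑ j ∈ Finset.range m, (-1:ℚ)^j * (m.choose (j+1))/(j+1) := by
      rw [Finset.sum_range_succ, Nat.choose_succ_self]
      simp
    rw [hlast, ih, H_succ]
    ring

lemma T_rec (n m : ℕ) : T (n+1) (m+1) = T n (m+1) + T n m := by
  unfold T
  rw [Finset.sum_range_succ, Finset.sum_range_succ (fun j => (-1:ℚ)^j * (n.choose (m+1-1-j)) / (j+1))]
  have hlast : (m+1) - 1 - m = 0 := by omega
  simp only [hlast]
  have hsplit : ∀ j ∈ Finset.range m,
      (-1:ℚ)^j * ((n+1).choose (m+1-1-j)) / (j+1)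
        = (-1:ℚ)^j * (n.choose (m+1-1-j)) / (j+1) + (-1:ℚ)^j * (n.choose (m-1-j)) / (j+1) := by
    intro j hj
    simp only [Finset.mem_range] at hj
    have h1 : m+1-1-j = (m-1-j)+1 := by omega
    rw [h1, Nat.choose_succ_succ]
    push_cast
    ring
  rw [Finset.sum_congr rfl hsplit, Finset.sum_add_distrib]
  simp [Nat.choose_zero_right]
  ring

lemma main (n : ℕ) : ∀ k ≤ n, T n k = (n.choose k : ℚ) * (H n - H (n-k)) := by
  induction n with
  | zero =>
    intro k hk
    interval_cases k
    simp [T]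
  | succ n ih =>
    intro k hk
    rcases Nat.eq_zero_or_pos k with rfl | hk0
    · simp [T]
    rcases Nat.lt_or_ge k (n+1) with hlt | hge
    · -- 1 ≤ k ≤ n
      have hkn : k ≤ n := by omega
      obtain ⟨m, rfl⟩ : ∃ m, k = m + 1 := ⟨k-1, by omega⟩
      rw [T_rec, ih (m+1) hkn, ih m (by omega)]
      have hH : H (n+1) = H n + 1/(n+1) := H_succ n
      have h2 : n + 1 - (m+1) = (n - (m+1)) + 1 := by omega
      have hcast : ((n - (m+1) : ℕ) : ℚ) = (n:ℚ) - (m+1) := by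
        push_cast [Nat.cast_sub hkn]; ring
      have hH2 : H (n+1-(m+1)) = H (n-(m+1)) + 1/((n:ℚ)-(m+1)+1) := by
        rw [h2, H_succ, hcast]
      have hnm : n - m = (n - (m+1)) + 1 := by omega
      have hH3 : H (n - m) = H (n-(m+1)) + 1/((n:ℚ)-(m+1)+1) := by
        rw [hnm, H_succ, hcast]
      have hpascal : ((n+1).choose (m+1) : ℚ) = (n.choose (m+1):ℚ) + (n.choose m:ℚ) := by
        rw [Nat.choose_succ_succ]; push_cast; ring
      have hd : ((n:ℚ) - (m+1) + 1) ≠ 0 := by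
        have hc2 : ((n - m : ℕ):ℚ) = (n:ℚ) - (m+1) + 1 := by
          push_cast [Nat.cast_sub (by omega : m ≤ n)]; ring
        rw [← hc2]
        have : 0 < n - m := by omega
        positivity
      have hn1 : ((n:ℚ)+1) ≠ 0 := by positivity
      have hrel : ((n:ℚ) - (m+1) + 1) * ((n+1).choose (m+1) : ℚ) = ((n:ℚ)+1) * (n.choose (m+1):ℚ) := by
        have hsym : (n+1).choose (m+1) = (n+1).choose (n-m) := by
          rw [← Nat.choose_symm (by omega : m+1 ≤ n+1)]
          congr 1
          omega
        have h' := Nat.add_one_mul_choose_eq n (n-(m+1))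
        have hsym2 : n.choose (n-(m+1)) = n.choose (m+1) := Nat.choose_symm hkn
        have hx : n - (m+1) + 1 = n - m := by omega
        rw [hsym2, hx] at h'
        have hc2 : ((n - m : ℕ):ℚ) = (n:ℚ) - (m+1) + 1 := by
          push_cast [Nat.cast_sub (by omega : m ≤ n)]; ring
        have h'' : ((n:ℚ)+1) * (n.choose (m+1):ℚ) = ((n+1).choose (n-m) : ℚ) * ((n-m:ℕ):ℚ) := by
          exact_mod_cast congrArg (fun x : ℕ => (x:ℚ)) h'
        rw [hc2, ← hsym] at h''
        linarith
      have e1 : ((n+1).choose (m+1):ℚ) / ((n:ℚ)+1) = (n.choose (m+1):ℚ) / ((n:ℚ)-(m+1)+1) := by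
        rw [div_eq_div_iff hn1 hd]; linarith
      rw [hH, hH2, hH3]
      linear_combination (H (n-(m+1)) + 1/((n:ℚ)-(m+1)+1) - H n) * hpascal - e1
    · -- k = n+1
      have : k = n + 1 := by omega
      subst this
      have hT : T (n+1) (n+1) = H (n+1) := by
        unfold T
        have hterm : ∀ j ∈ Finset.range (n+1),
            (-1:ℚ)^j * ((n+1).choose (n+1-1-j)) / (j+1)
              = (-1:ℚ)^j * ((n+1).choose (j+1)) / (j+1) := by
          intro j hj
          simp only [Finset.mem_range] at hj
          have hx : n+1-1-j = (n+1) - (j+1) := by omega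
          rw [hx, Nat.choose_symm (by omega : j+1 ≤ n+1)]
        rw [Finset.sum_congr rfl hterm, lemHarm]
      rw [hT]
      simp [Nat.choose_self, H]

theorem stmt_1 (n k : ℕ) (h0 : 0 < k) (hk : k ≤ n) :
    ∑ i ∈ Finset.range k, (-1 : ℚ) ^ (k + i - 1) * (n.choose i) / ((k : ℚ) - i) =
      (n.choose k : ℚ) * (H n - H (n - k)) := by
  rw [← main n k hk]
  unfold T
  rw [← Finset.sum_range_reflect (fun i => (-1 : ℚ) ^ (k + i - 1) * (n.choose i) / ((k : ℚ) - i)) k]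
  apply Finset.sum_congr rfl
  intro j hj
  simp only [Finset.mem_range] at hj
  have h1 : k + (k - 1 - j) - 1 = 2*k - 2 - j := by omega
  have h2 : ((k:ℚ) - ((k - 1 - j : ℕ):ℚ)) = (j:ℚ) + 1 := by
    have hx : (k - 1 - j) = k - (j+1) := by omega
    rw [hx, Nat.cast_sub (by omega : j+1 ≤ k)]
    push_cast; ring
  rw [h1, h2]
  have hpar : (-1:ℚ) ^ (2*k-2-j) = (-1:ℚ)^j := by
    have hx : 2*k-2-j = j + 2*(k-1-j) := by omega
    rw [hx, pow_add, pow_mul]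
    norm_num
  rw [hpar]
end

section
/- For the double integral I_n = ∫_0^1 ∫_0^1 (x(1-x)y(1-y))^n / ((1-xy) * log(1/(xy))) dx dy, one has 0 < I_n < 16^{-n} for all positive integers n. -/
open MeasureTheory Set intervalIntegral

set_option maxHeartbeats 4000000

noncomputable def fI (n : ℕ) (x y : ℝ) : ℝ :=
  (x * (1 - x) * y * (1 - y)) ^ n / ((1 - x * y) * Real.log (1 / (x * y)))

noncomputable def Qb (x y : ℝ) : ℝ :=
  (∑ k ∈ Finset.range 10, ((4*k+3:ℝ)/4) * (x^(k+1)*(1-x)) * (y^(k+1)*(1-y)))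
  + x^10*y^11*(3+x*y)/16 + 10*(x^11*y^11*(1-y))

noncomputable def qb (x : ℝ) : ℝ :=
  (∑ k ∈ Finset.range 10, ((4*k+3:ℝ)/4) * (x^(k+1)*(1-x)) * (1/((k:ℝ)+2) - 1/((k:ℝ)+3)))
  + (3*x^10/16)*(1/12) + (x^11/16)*(1/13) + (10*x^11)*(1/12 - 1/13)

noncomputable def rval : ℝ :=
  (∑ k ∈ Finset.range 10, ((4*k+3:ℝ)/4) * (1/((k:ℝ)+2) - 1/((k:ℝ)+3)) * (1/((k:ℝ)+2) - 1/((k:ℝ)+3)))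
  + (3/16)*(1/11)*(1/12) + (1/16)*(1/12)*(1/13) + 10*(1/12)*(1/12 - 1/13)

lemma key (x y : ℝ) (hx : x ∈ Ioo (0:ℝ) 1) (hy : y ∈ Ioo (0:ℝ) 1) :
    x*(1-x)*y*(1-y) / ((1-x*y)*Real.log (1/(x*y))) ≤ Qb x y := by
  obtain ⟨hx0, hx1⟩ := hx
  obtain ⟨hy0, hy1⟩ := hy
  set t := x*y with htdef
  have ht0 : 0 < t := mul_pos hx0 hy0
  have ht1 : t < 1 := by nlinarith
  set s := Real.sqrt t with hsdef
  have hs0 : 0 < s := Real.sqrt_pos.2 ht0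
  have hs2 : s^2 = t := Real.sq_sqrt ht0.le
  have hs1 : s < 1 := by nlinarith
  have hlog : 2*(1-s) ≤ Real.log (1/t) := by
    have hs' : Real.log s ≤ s - 1 := Real.log_le_sub_one_of_pos hs0
    rw [hsdef, Real.log_sqrt ht0.le] at hs'
    rw [one_div, Real.log_inv]; linarith
  have hN : 0 < x*(1-x)*y*(1-y) := by
    have := mul_pos (mul_pos (mul_pos hx0 (by linarith : (0:ℝ) < 1-x)) hy0) (by linarith : (0:ℝ) < 1-y)
    linarith [this]
  have h1t : 0 < 1 - t := by linarith
  have hden : 0 < (1-t)*(2*(1-s)) := mul_pos h1t (by linarith)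
  have step1 : x*(1-x)*y*(1-y) / ((1-t)*Real.log (1/t)) ≤ x*(1-x)*y*(1-y) / ((1-t)*(2*(1-s))) :=
    div_le_div_of_nonneg_left hN.le hden (mul_le_mul_of_nonneg_left hlog h1t.le)
  have step2 : x*(1-x)*y*(1-y) / ((1-t)*(2*(1-s))) ≤ x*(1-x)*y*(1-y) * (3+t)/(4*(1-t)^2) := by
    rw [div_le_div_iff₀ hden (by positivity)]
    have key2 : 2*(1+s) ≤ 3 + t := by nlinarith [sq_nonneg (1-s)]
    have hfac : (1-t) = (1-s)*(1+s) := by nlinarith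
    nlinarith [mul_nonneg (mul_nonneg hN.le (by linarith : (0:ℝ) ≤ 1-s)) (mul_nonneg h1t.le (by linarith : (0:ℝ) ≤ 3+t-2*(1+s))), mul_pos hN h1t, mul_pos (mul_pos hN h1t) h1t]
  have split : x*(1-x)*y*(1-y) * (3+t)/(4*(1-t)^2)
      = x*(1-x)*y*(1-y) * (∑ k ∈ Finset.range 10, ((4*k+3:ℝ)/4) * t^k)
        + x*(1-x)*y*(1-y) * (t^10*(3+t)/(4*(1-t)^2)) + x*(1-x)*y*(1-y) * (10*t^10/(1-t)) := by
    have h : (1:ℝ) - t ≠ 0 := by linarith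
    have hscal : (3+t)/(4*(1-t)^2) = (∑ k ∈ Finset.range 10, ((4*k+3:ℝ)/4) * t^k)
        + t^10*(3+t)/(4*(1-t)^2) + 10*t^10/(1-t) := by
      simp only [Finset.sum_range_succ, Finset.sum_range_zero]
      field_simp
      ring
    rw [mul_div_assoc, hscal]; ring
  have tail1 : x*(1-x)*y*(1-y) * (t^10*(3+t)/(4*(1-t)^2)) ≤ x^10*y^11*(3+t)/16 := by
    have h4 : 4*(x*(1-x)*(1-y)) ≤ (1-t)^2 := by nlinarith [sq_nonneg ((1-x)-x*(1-y))]
    have hpos : 0 < x*(1-x)*(1-y) := by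
      have := mul_pos (mul_pos hx0 (by linarith : (0:ℝ) < 1-x)) (by linarith : (0:ℝ) < 1-y)
      linarith
    have hnum : 0 ≤ t^10*(3+t) := by positivity
    have hstep : t^10*(3+t)/(4*(1-t)^2) ≤ t^10*(3+t)/(16*(x*(1-x)*(1-y))) := by
      have h16 : (0:ℝ) < 16*(x*(1-x)*(1-y)) := by linarith
      apply div_le_div_of_nonneg_left hnum h16
      nlinarith
    calc x*(1-x)*y*(1-y) * (t^10*(3+t)/(4*(1-t)^2))
        ≤ x*(1-x)*y*(1-y) * (t^10*(3+t)/(16*(x*(1-x)*(1-y)))) :=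
          mul_le_mul_of_nonneg_left hstep hN.le
      _ = x^10*y^11*(3+t)/16 := by
          rw [htdef]
          field_simp
  have tail2 : x*(1-x)*y*(1-y) * (10*t^10/(1-t)) ≤ 10*(x^11*y^11*(1-y)) := by
    have heq : x*(1-x)*y*(1-y) * (10*t^10/(1-t)) = 10*t^10*(x*y*(1-y))*((1-x)/(1-t)) := by
      field_simp
    rw [heq]
    have hd : (1-x)/(1-t) ≤ 1 := by
      rw [div_le_one h1t]; nlinarith
    have hc : (0:ℝ) ≤ 10*t^10*(x*y*(1-y)) := by
      have : (0:ℝ) ≤ x*y*(1-y) := by nlinarith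
      positivity
    calc 10*t^10*(x*y*(1-y))*((1-x)/(1-t)) ≤ 10*t^10*(x*y*(1-y))*1 :=
          mul_le_mul_of_nonneg_left hd hc
      _ = 10*(x^11*y^11*(1-y)) := by rw [htdef]; ring
  have hPsum : x*(1-x)*y*(1-y) * (∑ k ∈ Finset.range 10, ((4*k+3:ℝ)/4) * t^k)
      = ∑ k ∈ Finset.range 10, ((4*k+3:ℝ)/4) * (x^(k+1)*(1-x)) * (y^(k+1)*(1-y)) := by
    rw [Finset.mul_sum]
    apply Finset.sum_congr rfl
    intro k _
    rw [htdef]; ring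
  rw [Qb]
  calc x*(1-x)*y*(1-y) / ((1-t)*Real.log (1/t)) ≤ x*(1-x)*y*(1-y) * (3+t)/(4*(1-t)^2) :=
        le_trans step1 step2
    _ = _ := split
    _ ≤ _ := by rw [hPsum] at *; gcongr

lemma int_mono (m : ℕ) : ∫ y in (0:ℝ)..1, y^m*(1-y) = 1/((m:ℝ)+1) - 1/((m:ℝ)+2) := by
  have h : ∀ y:ℝ, y^m*(1-y) = y^m - y^(m+1) := by intro y; ring
  simp only [h]
  rw [intervalIntegral.integral_sub (intervalIntegral.intervalIntegrable_pow m)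
    (intervalIntegral.intervalIntegrable_pow (m+1))]
  simp [integral_pow]
  ring_nf

lemma intQ (x : ℝ) : ∫ y in (0:ℝ)..1, Qb x y = qb x := by
  have h : ∀ y:ℝ, Qb x y =
      (∑ k ∈ Finset.range 10, ((4*k+3:ℝ)/4) * (x^(k+1)*(1-x)) * (y^(k+1)*(1-y)))
      + ((3*x^10/16)*y^11 + ((x^11/16)*y^12 + (10*x^11)*(y^11*(1-y)))) := by
    intro y; simp only [Qb]; ring
  simp only [h]
  rw [intervalIntegral.integral_add (by apply Continuous.intervalIntegrable; fun_prop)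
      (by apply Continuous.intervalIntegrable; fun_prop)]
  rw [intervalIntegral.integral_finset_sum (fun k _ => by apply Continuous.intervalIntegrable; fun_prop)]
  rw [intervalIntegral.integral_add (by apply Continuous.intervalIntegrable; fun_prop)
      (by apply Continuous.intervalIntegrable; fun_prop)]
  rw [intervalIntegral.integral_add (by apply Continuous.intervalIntegrable; fun_prop)
      (by apply Continuous.intervalIntegrable; fun_prop)]
  simp only [intervalIntegral.integral_const_mul, int_mono, integral_pow, qb,
    Finset.sum_range_succ, Finset.sum_range_zero]
  norm_num
  ring_nf

lemma intq : ∫ x in (0:ℝ)..1, qb x = rval := by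
  have h : ∀ x:ℝ, qb x =
      (∑ k ∈ Finset.range 10, ((4*k+3:ℝ)/4) * (1/((k:ℝ)+2) - 1/((k:ℝ)+3)) * (x^(k+1)*(1-x)))
      + ((3/16*(1/12))*x^10 + ((1/16*(1/13))*x^11 + (10*(1/12-1/13))*x^11)) := by
    intro x; simp only [qb]
    rw [Finset.sum_congr rfl (fun k (_ : k ∈ Finset.range 10) => by
      show ((4*k+3:ℝ)/4) * (x^(k+1)*(1-x)) * (1/((k:ℝ)+2) - 1/((k:ℝ)+3))
          = ((4*k+3:ℝ)/4) * (1/((k:ℝ)+2) - 1/((k:ℝ)+3)) * (x^(k+1)*(1-x))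
      ring)]
    ring
  simp only [h]
  rw [intervalIntegral.integral_add (by apply Continuous.intervalIntegrable; fun_prop)
      (by apply Continuous.intervalIntegrable; fun_prop)]
  rw [intervalIntegral.integral_finset_sum (fun k _ => by apply Continuous.intervalIntegrable; fun_prop)]
  rw [intervalIntegral.integral_add (by apply Continuous.intervalIntegrable; fun_prop)
      (by apply Continuous.intervalIntegrable; fun_prop)]
  rw [intervalIntegral.integral_add (by apply Continuous.intervalIntegrable; fun_prop)
      (by apply Continuous.intervalIntegrable; fun_prop)]
  simp only [intervalIntegral.integral_const_mul, int_mono, integral_pow, rval,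
    Finset.sum_range_succ, Finset.sum_range_zero]
  norm_num

lemma rlt : rval < 1/16 := by
  simp only [rval, Finset.sum_range_succ, Finset.sum_range_zero]
  norm_num

lemma fI_meas (n : ℕ) : Measurable (fun p : ℝ × ℝ => fI n p.1 p.2) := by
  unfold fI
  apply Measurable.div
  · fun_prop
  · apply Measurable.mul
    · fun_prop
    · exact Real.measurable_log.comp (by fun_prop)

lemma fI_nonneg (n : ℕ) (x y : ℝ) (hx : x ∈ Icc (0:ℝ) 1) (hy : y ∈ Icc (0:ℝ) 1) :
    0 ≤ fI n x y := by
  obtain ⟨hx0, hx1⟩ := hx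
  obtain ⟨hy0, hy1⟩ := hy
  unfold fI
  apply div_nonneg
  · apply pow_nonneg
    nlinarith [mul_nonneg (mul_nonneg (mul_nonneg hx0 (by linarith : (0:ℝ) ≤ 1-x)) hy0) (by linarith : (0:ℝ) ≤ 1-y)]
  · apply mul_nonneg
    · nlinarith
    · rcases eq_or_lt_of_le (mul_nonneg hx0 hy0) with h | h
      · simp [← h]
      · apply Real.log_nonneg
        rw [le_div_iff₀ h]
        nlinarith

lemma fI_pos (n : ℕ) (x y : ℝ) (hx : x ∈ Ioo (0:ℝ) 1) (hy : y ∈ Ioo (0:ℝ) 1) :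
    0 < fI n x y := by
  obtain ⟨hx0, hx1⟩ := hx
  obtain ⟨hy0, hy1⟩ := hy
  have ht0 : 0 < x*y := mul_pos hx0 hy0
  have ht1 : x*y < 1 := by nlinarith
  unfold fI
  apply div_pos
  · apply pow_pos
    nlinarith [mul_pos (mul_pos (mul_pos hx0 (by linarith : (0:ℝ) < 1-x)) hy0) (by linarith : (0:ℝ) < 1-y)]
  · apply mul_pos (by linarith)
    apply Real.log_pos
    rw [lt_div_iff₀ ht0]; nlinarith

lemma fI_bdry (n : ℕ) (hn : 0 < n) (x y : ℝ) (h : x*(1-x)*y*(1-y) = 0) : fI n x y = 0 := by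
  unfold fI
  rw [h, zero_pow hn.ne', zero_div]

lemma Qb_nonneg (x y : ℝ) (hx : x ∈ Icc (0:ℝ) 1) (hy : y ∈ Icc (0:ℝ) 1) : 0 ≤ Qb x y := by
  obtain ⟨hx0, hx1⟩ := hx
  obtain ⟨hy0, hy1⟩ := hy
  have h1x : (0:ℝ) ≤ 1 - x := by linarith
  have h1y : (0:ℝ) ≤ 1 - y := by linarith
  have ht : (0:ℝ) ≤ 3 + x*y := by nlinarith
  unfold Qb
  have hsum : (0:ℝ) ≤ ∑ k ∈ Finset.range 10, ((4*k+3:ℝ)/4) * (x^(k+1)*(1-x)) * (y^(k+1)*(1-y)) := by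
    apply Finset.sum_nonneg
    intro k _
    have : (0:ℝ) ≤ (4*k+3:ℝ)/4 := by positivity
    positivity
  positivity

lemma qb_nonneg (x : ℝ) (hx : x ∈ Icc (0:ℝ) 1) : 0 ≤ qb x := by
  obtain ⟨hx0, hx1⟩ := hx
  have h1x : (0:ℝ) ≤ 1 - x := by linarith
  unfold qb
  have hsum : (0:ℝ) ≤ ∑ k ∈ Finset.range 10, ((4*k+3:ℝ)/4) * (x^(k+1)*(1-x)) * (1/((k:ℝ)+2) - 1/((k:ℝ)+3)) := by
    apply Finset.sum_nonneg
    intro k _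
    have h1 : (0:ℝ) ≤ (4*k+3:ℝ)/4 := by positivity
    have h2 : (0:ℝ) ≤ 1/((k:ℝ)+2) - 1/((k:ℝ)+3) := by
      rw [sub_nonneg]
      apply div_le_div_of_nonneg_left one_pos.le (by positivity)
      linarith
    positivity
  have : (0:ℝ) ≤ (1:ℝ)/12 - 1/13 := by norm_num
  positivity

lemma fI_le (n : ℕ) (hn : 0 < n) (x : ℝ) (hx : x ∈ Ioo (0:ℝ) 1) (y : ℝ) (hy : y ∈ Icc (0:ℝ) 1) :
    fI n x y ≤ (1/16:ℝ)^(n-1) * Qb x y := by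
  rcases eq_or_lt_of_le hy.1 with h0 | h0
  · rw [fI_bdry n hn x y (by rw [← h0]; ring)]
    exact mul_nonneg (by positivity) (Qb_nonneg x y (Ioo_subset_Icc_self hx) hy)
  rcases eq_or_lt_of_le hy.2 with h1 | h1
  · rw [fI_bdry n hn x y (by rw [h1]; ring)]
    exact mul_nonneg (by positivity) (Qb_nonneg x y (Ioo_subset_Icc_self hx) hy)
  have hy' : y ∈ Ioo (0:ℝ) 1 := ⟨h0, h1⟩
  obtain ⟨hx0, hx1⟩ := hx
  have ha0 : (0:ℝ) ≤ x*(1-x) := by nlinarith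
  have hb0 : (0:ℝ) ≤ y*(1-y) := by nlinarith [hy'.1, hy'.2]
  have hN0 : (0:ℝ) ≤ x*(1-x)*y*(1-y) := by nlinarith [mul_nonneg ha0 hb0]
  have ha : x*(1-x) ≤ 1/4 := by nlinarith [sq_nonneg (x-1/2)]
  have hb : y*(1-y) ≤ 1/4 := by nlinarith [sq_nonneg (y-1/2)]
  have hN16 : x*(1-x)*y*(1-y) ≤ 1/16 := by
    nlinarith [mul_le_mul ha hb hb0 (by norm_num : (0:ℝ) ≤ 1/4)]
  have hsplit : fI n x y = (x*(1-x)*y*(1-y))^(n-1) * (x*(1-x)*y*(1-y) / ((1-x*y)*Real.log (1/(x*y)))) := by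
    unfold fI
    rw [mul_div_assoc']
    congr 1
    rw [← pow_succ]
    congr 1
    omega
  rw [hsplit]
  apply mul_le_mul
  · exact pow_le_pow_left₀ hN0 hN16 _
  · exact key x y ⟨hx0, hx1⟩ hy'
  · have := fI_nonneg 1 x y (Ioo_subset_Icc_self ⟨hx0, hx1⟩) (Ioo_subset_Icc_self hy')
    unfold fI at this
    rwa [pow_one] at this
  · positivity

-- inner integrability
lemma inner_intble (n : ℕ) (hn : 0 < n) (x : ℝ) (hx : x ∈ Ioo (0:ℝ) 1) :
    IntervalIntegrable (fun y => fI n x y) volume 0 1 := by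
  rw [intervalIntegrable_iff, uIoc_of_le (by norm_num : (0:ℝ) ≤ 1)]
  apply Integrable.mono' (g := fun y => (1/16:ℝ)^(n-1) * Qb x y)
  · apply Continuous.integrableOn_Ioc
    have : Continuous (fun y => Qb x y) := by unfold Qb; fun_prop
    fun_prop
  · exact ((fI_meas n).comp (measurable_const.prodMk measurable_id)).aestronglyMeasurable
  · refine (ae_restrict_iff' measurableSet_Ioc).2 (Filter.Eventually.of_forall fun y hy => ?_)
    have hyIcc : y ∈ Icc (0:ℝ) 1 := ⟨hy.1.le, hy.2⟩
    rw [Real.norm_eq_abs, abs_of_nonneg (fI_nonneg n x y (Ioo_subset_Icc_self hx) hyIcc)]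
    exact fI_le n hn x hx y hyIcc

noncomputable def G (n : ℕ) (x : ℝ) : ℝ := ∫ y in (0:ℝ)..1, fI n x y

lemma G_pos (n : ℕ) (hn : 0 < n) (x : ℝ) (hx : x ∈ Ioo (0:ℝ) 1) : 0 < G n x :=
  intervalIntegral.intervalIntegral_pos_of_pos_on (inner_intble n hn x hx)
    (fun y hy => fI_pos n x y hx hy) one_pos

lemma G_nonneg (n : ℕ) (x : ℝ) (hx : x ∈ Icc (0:ℝ) 1) : 0 ≤ G n x := by
  apply intervalIntegral.integral_nonneg (by norm_num)
  intro y hy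
  exact fI_nonneg n x y hx hy

lemma G_le (n : ℕ) (hn : 0 < n) (x : ℝ) (hx : x ∈ Icc (0:ℝ) 1) :
    G n x ≤ (1/16:ℝ)^(n-1) * qb x := by
  rcases eq_or_lt_of_le hx.1 with h0 | h0
  · have hz : ∀ y, fI n x y = 0 := fun y => fI_bdry n hn x y (by rw [← h0]; ring)
    have : G n x = 0 := by unfold G; simp [hz]
    rw [this]
    exact mul_nonneg (by positivity) (qb_nonneg x hx)
  rcases eq_or_lt_of_le hx.2 with h1 | h1
  · have hz : ∀ y, fI n x y = 0 := fun y => fI_bdry n hn x y (by rw [h1]; ring)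
    have : G n x = 0 := by unfold G; simp [hz]
    rw [this]
    exact mul_nonneg (by positivity) (qb_nonneg x hx)
  have hx' : x ∈ Ioo (0:ℝ) 1 := ⟨h0, h1⟩
  have hq : ∫ y in (0:ℝ)..1, (1/16:ℝ)^(n-1) * Qb x y = (1/16:ℝ)^(n-1) * qb x := by
    rw [intervalIntegral.integral_const_mul, intQ]
  rw [← hq]
  apply intervalIntegral.integral_mono_on (by norm_num) (inner_intble n hn x hx')
  · apply Continuous.intervalIntegrable
    have : Continuous (fun y => Qb x y) := by unfold Qb; fun_prop
    fun_prop
  · intro y hy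
    exact fI_le n hn x hx' y hy

lemma G_meas (n : ℕ) : StronglyMeasurable (G n) := by
  have : G n = fun x => ∫ y in Ioc (0:ℝ) 1, fI n x y := by
    funext x
    unfold G
    rw [intervalIntegral.integral_of_le (by norm_num : (0:ℝ) ≤ 1)]
  rw [this]
  exact (fI_meas n).stronglyMeasurable.integral_prod_right'

lemma G_intble (n : ℕ) (hn : 0 < n) : IntervalIntegrable (G n) volume 0 1 := by
  rw [intervalIntegrable_iff, uIoc_of_le (by norm_num : (0:ℝ) ≤ 1)]
  apply Integrable.mono' (g := fun x => (1/16:ℝ)^(n-1) * qb x)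
  · apply Continuous.integrableOn_Ioc
    have : Continuous qb := by unfold qb; fun_prop
    fun_prop
  · exact (G_meas n).aestronglyMeasurable
  · refine (ae_restrict_iff' measurableSet_Ioc).2 (Filter.Eventually.of_forall fun x hx => ?_)
    have hxIcc : x ∈ Icc (0:ℝ) 1 := ⟨hx.1.le, hx.2⟩
    rw [Real.norm_eq_abs, abs_of_nonneg (G_nonneg n x hxIcc)]
    exact G_le n hn x hxIcc

/-- Beukers-type double integral `I n` over the unit square. -/
noncomputable def I (n : ℕ) : ℝ :=
  ∫ x in (0 : ℝ)..1, ∫ y in (0 : ℝ)..1,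
    (x * (1 - x) * y * (1 - y)) ^ n / ((1 - x * y) * Real.log (1 / (x * y)))

theorem stmt_8 (n : ℕ) (hn : 0 < n) : 0 < I n ∧ I n < 1 / 16 ^ n := by
  have hI : I n = ∫ x in (0:ℝ)..1, G n x := rfl
  constructor
  · rw [hI]
    exact intervalIntegral.intervalIntegral_pos_of_pos_on (G_intble n hn)
      (fun x hx => G_pos n hn x hx) one_pos
  · rw [hI]
    have h1 : ∫ x in (0:ℝ)..1, G n x ≤ ∫ x in (0:ℝ)..1, (1/16:ℝ)^(n-1) * qb x := by
      apply intervalIntegral.integral_mono_on (by norm_num) (G_intble n hn)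
      · apply Continuous.intervalIntegrable
        have : Continuous qb := by unfold qb; fun_prop
        fun_prop
      · intro x hx
        exact G_le n hn x hx
    have h2 : ∫ x in (0:ℝ)..1, (1/16:ℝ)^(n-1) * qb x = (1/16:ℝ)^(n-1) * rval := by
      rw [intervalIntegral.integral_const_mul, intq]
    have h3 : (1/16:ℝ)^(n-1) * rval < (1/16:ℝ)^(n-1) * (1/16) := by
      apply mul_lt_mul_of_pos_left rlt (by positivity)
    have h4 : (1/16:ℝ)^(n-1) * (1/16) = 1 / 16^n := by
      rw [← pow_succ]
      rw [Nat.sub_add_cancel hn]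
      rw [one_div_pow]
    calc ∫ x in (0:ℝ)..1, G n x ≤ (1/16:ℝ)^(n-1) * rval := by rw [← h2]; exact h1
      _ < 1 / 16^n := by rw [← h4]; exact h3
end
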